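/- For every integer p and every non-negative integer n, the poly-Bernoulli numbers can be expressed through generalized harmonic numbers as B_n^{(p)} = Σ_{k=0}^{n} (-1)^{n-k} · {n+1, k+1} · k! · H_{k+1}^{(p)}, where {n+1, k+1} denotes the Stirling number of the second kind. The identity is an equality of rational numbers. -/

import Mathlib

/-- Unsigned Stirling numbers of the first kind: `[n, k]` counts permutations
of `n` elements with `k` disjoint cycles. -/
def stirlingFirst : ℕ → ℕ → ℕ
  | 0, 0 => 1
  | 0, _ + 1 => 0
  | _ + 1, 0 => 0
  | n + 1, k + 1 => n * stirlingFirst n (k + 1) + stirlingFirst n k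

/-- Stirling numbers of the second kind: `{n, k}` counts partitions of an
`n`-element set into `k` non-empty blocks. -/
def stirlingSecond : ℕ → ℕ → ℕ
  | 0, 0 => 1
  | 0, _ + 1 => 0
  | _ + 1, 0 => 0
  | n + 1, k + 1 => (k + 1) * stirlingSecond n (k + 1) + stirlingSecond n k

/-- Generalized harmonic number `H_n^(p) = ∑_{k=1}^n k^(-p)` as a rational number. -/
def genHarmonic (n : ℕ) (p : ℤ) : ℚ :=
  ∑ k ∈ Finset.Icc 1 n, ((k : ℚ)) ^ (-p)

/-- Poly-Bernoulli number `B_n^(p)`, via the explicit formula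
`B_n^(p) = ∑_{m=0}^n (-1)^(n+m) ⬝ m! ⬝ {n, m} / (m+1)^p`. -/
def polyBernoulli (p : ℤ) (n : ℕ) : ℚ :=
  ∑ m ∈ Finset.range (n + 1),
    (-1 : ℚ) ^ (n + m) * (Nat.factorial m) * (stirlingSecond n m) / ((m + 1 : ℚ)) ^ p

/-!
Writing `H_{k+1}^{(p)} = ∑_{m ≤ k} (m+1)^{-p}` and exchanging the two sums, the claim reduces to
the coefficient identity `∑_{k=m}^{n} (-1)^{n-k} k! {n+1, k+1} = (-1)^{n+m} m! {n, m}`.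
Multiplied by `k!`, the recurrence for `{n+1, k+1}` reads
`k! {n+1, k+1} = (k+1)! {n, k+1} + k! {n, k}`, so the alternating sum telescopes, and the
boundary term at `k = n + 1` vanishes.
-/

open Finset
open scoped Nat

lemma stirlingSecond_eq_nat_stirlingSecond : ∀ n k : ℕ, stirlingSecond n k = Nat.stirlingSecond n k
  | 0, 0 | 0, _ + 1 | _ + 1, 0 => rfl
  | n + 1, k + 1 => by
    rw [stirlingSecond, Nat.stirlingSecond_succ_succ, stirlingSecond_eq_nat_stirlingSecond n k,
      stirlingSecond_eq_nat_stirlingSecond n (k + 1)]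

lemma Nat.factorial_mul_stirlingSecond_succ_succ (n k : ℕ) :
    k ! * Nat.stirlingSecond (n + 1) (k + 1) =
      (k + 1)! * Nat.stirlingSecond n (k + 1) + k ! * Nat.stirlingSecond n k := by
  rw [Nat.stirlingSecond_succ_succ, Nat.factorial_succ]
  ring

lemma Nat.sum_Ico_neg_one_pow_mul_factorial_mul_stirlingSecond_succ_succ {m n : ℕ}
    (hm : m ≤ n + 1) :
    ∑ k ∈ Ico m (n + 1), (-1 : ℚ) ^ (n + k) * k ! * Nat.stirlingSecond (n + 1) (k + 1) =
      (-1) ^ (n + m) * m ! * Nat.stirlingSecond n m := by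
  set f : ℕ → ℚ := fun k ↦ (-1) ^ (n + k) * k ! * Nat.stirlingSecond n k
  have hstep (k : ℕ) :
      (-1 : ℚ) ^ (n + k) * k ! * Nat.stirlingSecond (n + 1) (k + 1) = f k - f (k + 1) := by
    have := congrArg (Nat.cast (R := ℚ)) (Nat.factorial_mul_stirlingSecond_succ_succ n k)
    push_cast at this
    simp only [f, ← add_assoc, pow_succ]
    linear_combination (-1 : ℚ) ^ (n + k) * this
  have hlast : f (n + 1) = 0 := by
    simp [f, Nat.stirlingSecond_eq_zero_of_lt (Nat.lt_succ_self n)]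
  calc ∑ k ∈ Ico m (n + 1), (-1 : ℚ) ^ (n + k) * k ! * Nat.stirlingSecond (n + 1) (k + 1)
      _ = -∑ k ∈ Ico m (n + 1), (f (k + 1) - f k) := by
        simp only [hstep, ← sum_neg_distrib, neg_sub]
      _ = f m := by rw [sum_Ico_sub (f := f) hm, hlast, zero_sub, neg_neg]

lemma genHarmonic_eq_sum_range (n : ℕ) (p : ℤ) :
    genHarmonic n p = ∑ m ∈ range n, ((m : ℚ) + 1) ^ (-p) := by
  rw [genHarmonic, ← Ico_add_one_right_eq_Icc, range_eq_Ico]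
  exact_mod_cast (sum_Ico_add' (fun k : ℕ ↦ (k : ℚ) ^ (-p)) 0 n 1).symm

theorem polyBernoulli_eq_sum_stirlingSecond_genHarmonic (p : ℤ) (n : ℕ) :
    polyBernoulli p n =
      ∑ k ∈ Finset.range (n + 1),
        (-1 : ℚ) ^ (n - k) * (stirlingSecond (n + 1) (k + 1) : ℚ) * (Nat.factorial k : ℚ) *
          genHarmonic (k + 1) p := by
  have hsign {k : ℕ} (hk : k ≤ n) : (-1 : ℚ) ^ (n - k) = (-1) ^ (n + k) := by
    rw [show n + k = n - k + 2 * k by omega, pow_add, pow_mul, neg_one_sq, one_pow, mul_one]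
  simp only [polyBernoulli, genHarmonic_eq_sum_range, stirlingSecond_eq_nat_stirlingSecond,
    mul_sum, range_eq_Ico]
  rw [← sum_Ico_Ico_comm]
  refine sum_congr rfl fun m hm ↦ ?_
  rw [div_eq_mul_inv, ← zpow_neg,
    ← Nat.sum_Ico_neg_one_pow_mul_factorial_mul_stirlingSecond_succ_succ (mem_Ico.mp hm).2.le,
    sum_mul]
  refine sum_congr rfl fun k hk ↦ ?_
  rw [hsign (Nat.le_of_lt_succ (mem_Ico.mp hk).2)]
  ring
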